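/- For every α ∈ (1,2) and every integer n ≥ 1, the symmetric Toeplitz matrix G_n^{(α)} is negative definite, i.e., x^T G_n^{(α)} x < 0 for every nonzero vector x ∈ ℝ^n. -/

import Mathlib

/-!
The matrix has diagonal `2 g₁ = -2α` and positive off-diagonal entries, and every row sum is
negative. Indeed, the off-diagonal part of a row consists of two partial sums of
`g₀ + g₂ + g₃ + ⋯`; as the `g_l^{(α)}` are the coefficients of `(1 - z)^α`, the partial sums
`∑_{l ≤ m} g_l^{(α)}` are the coefficients `g_m^{(α-1)} < 0` of `(1 - z)^(α-1)`, so each of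
those two sums is below `-g₁ = α`. A symmetric matrix with nonnegative off-diagonal entries and
negative row sums `rᵢ` is negative definite, by
`xᵀ A x = ∑ᵢ rᵢ xᵢ² - ½ ∑ᵢⱼ aᵢⱼ (xᵢ - xⱼ)²`.
-/

/-- Grünwald–Letnikov coefficients: `g α 0 = 1`,
`g α l = (1 - (α+1)/l) * g α (l-1)` for `l ≥ 1`. -/
noncomputable def g (α : ℝ) : ℕ → ℝ
  | 0 => 1
  | l + 1 => (1 - (α + 1) / ((l : ℝ) + 1)) * g α l


/-- First column (Toeplitz symbol) of `G_n^{(α)}`: entry at distance `d` is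
`2 g₁` if `d = 0`, `g₀ + g₂` if `d = 1`, and `g_{d+1}` if `d ≥ 2`. -/
noncomputable def gSymb (α : ℝ) : ℕ → ℝ
  | 0 => 2 * g α 1
  | 1 => g α 0 + g α 2
  | d + 2 => g α (d + 3)

/-- The symmetric Toeplitz matrix `G_n^{(α)}`. -/
noncomputable def Gmat (α : ℝ) (n : ℕ) : Matrix (Fin n) (Fin n) ℝ :=
  Matrix.of fun i j => gSymb α (((i : ℤ) - (j : ℤ)).natAbs)

open Finset

lemma g_zero (β : ℝ) : g β 0 = 1 := rfl

lemma g_one (β : ℝ) : g β 1 = -β := by simp [g]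

lemma g_succ (β : ℝ) (m : ℕ) : g β (m + 1) = (1 - (β + 1) / ((m : ℝ) + 1)) * g β m := rfl

lemma g_succ_eq_mul_g_sub_one (β : ℝ) (m : ℕ) :
    g β (m + 1) = -(β / ((m : ℝ) + 1)) * g (β - 1) m := by
  induction m with
  | zero => simp [g]
  | succ m ih =>
    rw [g_succ, ih, g_succ]
    push_cast
    field_simp
    ring

lemma g_sub_one_succ (β : ℝ) (m : ℕ) : g (β - 1) (m + 1) = g (β - 1) m + g β (m + 1) := by
  rw [g_succ (β - 1), g_succ_eq_mul_g_sub_one β, sub_add_cancel]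
  ring

lemma g_succ_neg {β : ℝ} (hβ₀ : 0 < β) (hβ₁ : β < 1) (m : ℕ) : g β (m + 1) < 0 := by
  induction m with
  | zero => rw [g_one]; linarith
  | succ m ih =>
    rw [g_succ]
    refine mul_neg_of_pos_of_neg ?_ ih
    rw [sub_pos, div_lt_one (by positivity)]
    push_cast
    linarith [(Nat.cast_nonneg m : (0 : ℝ) ≤ m)]

lemma g_add_two_pos {α : ℝ} (hα₁ : 1 < α) (hα₂ : α < 2) (m : ℕ) : 0 < g α (m + 2) := by
  rw [g_succ_eq_mul_g_sub_one, neg_mul]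
  exact neg_pos.2 (mul_neg_of_pos_of_neg (by positivity)
    (g_succ_neg (by linarith) (by linarith) m))

lemma gSymb_succ_pos {α : ℝ} (hα₁ : 1 < α) (hα₂ : α < 2) : ∀ d, 0 < gSymb α (d + 1)
  | 0 => show 0 < g α 0 + g α 2 by linarith [g_zero α, g_add_two_pos hα₁ hα₂ 0]
  | d + 1 => g_add_two_pos hα₁ hα₂ (d + 1)

-- `gSymb α (d + 1)` runs through `g₀, g₂, g₃, …`: a partial sum of `g α` lacking `g₁ = -α`.
lemma sum_range_gSymb_succ (α : ℝ) (m : ℕ) :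
    ∑ d ∈ range (m + 1), gSymb α (d + 1) = α + g (α - 1) (m + 2) := by
  induction m with
  | zero =>
    simp only [zero_add, sum_range_one, gSymb]
    rw [g_sub_one_succ, g_sub_one_succ, g_zero, g_zero, g_one]
    ring
  | succ m ih =>
    rw [sum_range_succ, ih, g_sub_one_succ α (m + 2)]
    simp only [gSymb]
    ring

lemma sum_range_gSymb_succ_lt {α : ℝ} (hα₁ : 1 < α) (hα₂ : α < 2) (m : ℕ) :
    ∑ d ∈ range m, gSymb α (d + 1) < α := by
  rcases m with _ | m
  · simpa using zero_lt_one.trans hα₁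
  · rw [sum_range_gSymb_succ]
    linarith [g_succ_neg (β := α - 1) (by linarith) (by linarith) (m + 1)]

lemma sum_range_natAbs_sub {M : Type*} [AddCommMonoid M] (f : ℕ → M) {i n : ℕ} (hi : i < n) :
    ∑ j ∈ range n, f ((i : ℤ) - j).natAbs
      = ∑ d ∈ range (i + 1), f d + ∑ d ∈ range (n - (i + 1)), f (d + 1) := by
  rw [← sum_range_add_sum_Ico _ hi, sum_Ico_eq_sum_range, ← sum_range_reflect]
  congr 1
  · refine sum_congr rfl fun j hj => ?_
    have := mem_range.1 hj
    congr 1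
    omega
  · refine sum_congr rfl fun d _ => ?_
    congr 1
    omega

namespace Matrix

variable {ι : Type*} [Fintype ι]

lemma dotProduct_mulVec_self_eq_of_isSymm {A : Matrix ι ι ℝ} (hA : A.IsSymm) (x : ι → ℝ) :
    x ⬝ᵥ (A *ᵥ x)
      = ∑ i, (∑ j, A i j) * x i ^ 2 - (∑ i, ∑ j, A i j * (x i - x j) ^ 2) / 2 := by
  have h_swap : ∑ i, ∑ j, A i j * x j ^ 2 = ∑ i, ∑ j, A i j * x i ^ 2 := by
    rw [sum_comm]
    exact sum_congr rfl fun i _ => sum_congr rfl fun j _ => by rw [hA.apply i j]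
  have h_expand : ∑ i, ∑ j, A i j * (x i - x j) ^ 2
      = ∑ i, ∑ j, A i j * x i ^ 2 + ∑ i, ∑ j, A i j * x j ^ 2
        - 2 * ∑ i, ∑ j, x i * (A i j * x j) := by
    simp only [← sum_add_distrib, ← sum_sub_distrib, mul_sum]
    exact sum_congr rfl fun i _ => sum_congr rfl fun j _ => by ring
  have h_quad : x ⬝ᵥ (A *ᵥ x) = ∑ i, ∑ j, x i * (A i j * x j) := by
    simp only [dotProduct, mulVec, mul_sum]
  simp only [h_quad, sum_mul]
  linear_combination (h_expand + h_swap) / 2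

lemma dotProduct_mulVec_self_neg_of_sum_row_neg {A : Matrix ι ι ℝ} (hA : A.IsSymm)
    (h_nonneg : ∀ i j, i ≠ j → 0 ≤ A i j) (h_row : ∀ i, ∑ j, A i j < 0)
    {x : ι → ℝ} (hx : x ≠ 0) : x ⬝ᵥ (A *ᵥ x) < 0 := by
  obtain ⟨i₀, hi₀⟩ := Function.ne_iff.1 hx
  have h_diag : ∑ i, (∑ j, A i j) * x i ^ 2 < 0 :=
    sum_neg' (fun i _ => mul_nonpos_of_nonpos_of_nonneg (h_row i).le (sq_nonneg _))
      ⟨i₀, mem_univ _, mul_neg_of_neg_of_pos (h_row i₀) (sq_pos_of_ne_zero hi₀)⟩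
  have h_off : 0 ≤ ∑ i, ∑ j, A i j * (x i - x j) ^ 2 := by
    refine sum_nonneg fun i _ => sum_nonneg fun j _ => ?_
    rcases eq_or_ne i j with rfl | hij
    · simp
    · exact mul_nonneg (h_nonneg i j hij) (sq_nonneg _)
  rw [dotProduct_mulVec_self_eq_of_isSymm hA]
  linarith

end Matrix

lemma Gmat_isSymm (α : ℝ) (n : ℕ) : (Gmat α n).IsSymm :=
  Matrix.IsSymm.ext fun i j => by
    simp only [Gmat, Matrix.of_apply]
    congr 1
    omega

lemma Gmat_nonneg_of_ne {α : ℝ} (hα₁ : 1 < α) (hα₂ : α < 2) {n : ℕ} {i j : Fin n} (hij : i ≠ j) :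
    0 ≤ Gmat α n i j := by
  obtain ⟨d, hd⟩ : ∃ d, ((i : ℤ) - j).natAbs = d + 1 :=
    Nat.exists_eq_add_one.2 (by simpa [sub_eq_zero, Fin.val_inj] using hij)
  simpa [Gmat, hd] using (gSymb_succ_pos hα₁ hα₂ d).le

lemma sum_Gmat_row_neg {α : ℝ} (hα₁ : 1 < α) (hα₂ : α < 2) {n : ℕ} (i : Fin n) :
    ∑ j, Gmat α n i j < 0 := by
  have h_diag : gSymb α 0 = -2 * α := by rw [gSymb, g_one]; ring
  simp only [Gmat, Matrix.of_apply]
  rw [Fin.sum_univ_eq_sum_range (fun j => gSymb α ((i : ℤ) - j).natAbs),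
    sum_range_natAbs_sub _ i.isLt, sum_range_succ', h_diag]
  linarith [sum_range_gSymb_succ_lt hα₁ hα₂ i, sum_range_gSymb_succ_lt hα₁ hα₂ (n - (i + 1))]

open Matrix in
theorem stmt5_general (α : ℝ) (hα₁ : 1 < α) (hα₂ : α < 2) (n : ℕ) :
    ∀ x : Fin n → ℝ, x ≠ 0 → x ⬝ᵥ (Gmat α n *ᵥ x) < 0 :=
  fun _ hx => dotProduct_mulVec_self_neg_of_sum_row_neg (Gmat_isSymm α n)
    (fun _ _ => Gmat_nonneg_of_ne hα₁ hα₂) (sum_Gmat_row_neg hα₁ hα₂) hx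

open Matrix in
theorem stmt5 (α : ℝ) (hα₁ : 1 < α) (hα₂ : α < 2) (n : ℕ) (hn : 1 ≤ n) :
    ∀ x : Fin n → ℝ, x ≠ 0 → x ⬝ᵥ (Gmat α n *ᵥ x) < 0 :=
  stmt5_general α hα₁ hα₂ n
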